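/- Let n, d be positive integers, let σ : {0,1}^n → Matrix (Fin d) (Fin d) ℂ assign a density matrix (a quantum encoding) to every n-bit string, and for each index i ∈ {1,…,n} let E_i be a positive semidefinite d×d matrix with E_i ≤ I (a two-outcome measurement for recovering the i-th bit). Suppose that for some 0 ≤ ε ≤ 1/2 the average success probability is at least 1 − ε, i.e., (1/(n·2^n))·∑_{x ∈ {0,1}^n} ∑_{i=1}^{n} s(x,i) ≥ 1 − ε, where s(x,i) = Re Tr(E_i·σ_x) if x_i = 1 and s(x,i) = 1 − Re Tr(E_i·σ_x) if x_i = 0. Then log₂ d ≥ (1 − H(ε))·n. (Average-case lower bound for quantum random access codes: a one-message quantum protocol for the index function requires (1−H(ε))n qubits.) -/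

import Mathlib

open Matrix BigOperators Kronecker
open scoped ComplexOrder

noncomputable section
open Classical

/-- The positive semidefinite square root of a matrix (junk value `0` if not PSD). -/
def msqrt {d : Type*} [Fintype d] [DecidableEq d] (A : Matrix d d ℂ) : Matrix d d ℂ :=
  if h : A.PosSemidef then
    (h.1.eigenvectorUnitary : Matrix d d ℂ) *
      diagonal (fun i => ((Real.sqrt (h.1.eigenvalues i) : ℝ) : ℂ)) *
      (star h.1.eigenvectorUnitary : Matrix d d ℂ)
  else 0

/-- The trace norm `Tr √(AᴴA)` of a complex matrix. -/
def traceNorm {d : Type*} [Fintype d] [DecidableEq d] (A : Matrix d d ℂ) : ℝ :=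
  ((msqrt (Aᴴ * A)).trace).re

/-- `ρ` is a density matrix: positive semidefinite with trace `1`. -/
def IsDensityMatrix {d : Type*} [Fintype d] [DecidableEq d] (ρ : Matrix d d ℂ) : Prop :=
  ρ.PosSemidef ∧ ρ.trace = 1

/-- Von Neumann entropy, base 2 (junk value `0` if not Hermitian). -/
def vnEntropy {d : Type*} [Fintype d] [DecidableEq d] (ρ : Matrix d d ℂ) : ℝ :=
  if h : ρ.IsHermitian then -∑ i, (h.eigenvalues i) * Real.logb 2 (h.eigenvalues i) else 0

/-- The binary entropy function, base 2. -/
def binEntropy (p : ℝ) : ℝ := -p * Real.logb 2 p - (1 - p) * Real.logb 2 (1 - p)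

/-- Fidelity of two matrices: `(Tr √(√ρ₁ ρ₂ √ρ₁))²`. -/
def fidelity {d : Type*} [Fintype d] [DecidableEq d] (ρ₁ ρ₂ : Matrix d d ℂ) : ℝ :=
  (((msqrt (msqrt ρ₁ * ρ₂ * msqrt ρ₁)).trace).re) ^ 2

/-- Partial trace over the second tensor factor. -/
def ptraceSnd {m k : ℕ} (ρ : Matrix (Fin m × Fin k) (Fin m × Fin k) ℂ) :
    Matrix (Fin m) (Fin m) ℂ :=
  Matrix.of fun i j => ∑ l : Fin k, ρ (i, l) (j, l)

end

/-!
Replace each measurement `Eᵢ` by the `±1` observable `Bᵢ = 2Eᵢ - 1`, a Hermitian contraction, and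
let `Mₓ = ∑ᵢ (±1)ᵢ Bᵢ` carry the signs of `x`. The success hypothesis says that the average of
`Tr (Mₓ σₓ)` is at least `n (1 - 2ε)`. For `t ≥ 0`,
`∑ₓ exp (t Tr (Mₓ σₓ)) ≤ ∑ₓ Tr exp (t Mₓ) ≤ d ∑ₓ exp (t ∑ᵢ (±1)ᵢ) = d (eᵗ + e⁻ᵗ)ⁿ`:
expanding `Mₓᵐ` into words in the `Bᵢ`, the sum over `x` of the sign of a word is `2ⁿ` or `0`
according as every letter occurs an even number of times, and the trace of a word in
contractions is at most `d`; the same expansion with every `Bᵢ` replaced by `1` gives the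
right-hand side. Jensen's inequality over `x` turns this into `2ⁿ eᵗⁿ⁽¹⁻²ᵋ⁾ ≤ d (eᵗ + e⁻ᵗ)ⁿ`, and
the choice `tanh t = 1 - 2ε` yields `log₂ d ≥ (1 - H(ε)) n`.
-/

open Finset

namespace Matrix

variable {ι : Type*} [Fintype ι] [DecidableEq ι]

theorem re_trace_conjTranspose_mul_self_mul_le {A W : Matrix ι ι ℂ}
    (hA : (1 - Aᴴ * A).PosSemidef) :
    ((A * W)ᴴ * (A * W)).trace.re ≤ (Wᴴ * W).trace.re := by
  have hgap : (Wᴴ * W).trace - ((A * W)ᴴ * (A * W)).trace = (Wᴴ * (1 - Aᴴ * A) * W).trace := by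
    simp only [conjTranspose_mul, mul_sub, sub_mul, mul_one, trace_sub, mul_assoc]
  have hnonneg := (Complex.nonneg_iff.mp (hA.conjTranspose_mul_mul_same W).trace_nonneg).1
  rw [← hgap, Complex.sub_re] at hnonneg
  linarith

theorem re_trace_conjTranspose_mul_self_list_prod_le_card (L : List (Matrix ι ι ℂ))
    (hL : ∀ A ∈ L, (1 - Aᴴ * A).PosSemidef) :
    (L.prodᴴ * L.prod).trace.re ≤ Fintype.card ι := by
  induction L with
  | nil => simp
  | cons A L ih =>
    rw [List.prod_cons]
    exact (re_trace_conjTranspose_mul_self_mul_le (hL A (List.mem_cons_self ..))).trans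
      (ih fun B hB => hL B (List.mem_cons_of_mem A hB))

omit [DecidableEq ι] in
theorem sq_re_trace_le_card_mul_re_trace_conjTranspose_mul_self (W : Matrix ι ι ℂ) :
    W.trace.re ^ 2 ≤ Fintype.card ι * (Wᴴ * W).trace.re := by
  have hgram : (Wᴴ * W).trace.re = ∑ j, ∑ i, Complex.normSq (W i j) := by
    simp only [trace, diag_apply, mul_apply, conjTranspose_apply, Complex.re_sum,
      Complex.star_def, ← Complex.normSq_eq_conj_mul_self, Complex.ofReal_re]
  have hdiag : ∑ i, (W i i).re ^ 2 ≤ (Wᴴ * W).trace.re := by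
    rw [hgram]
    gcongr with i
    exact (sq (W i i).re ▸ Complex.re_sq_le_normSq _).trans
      (single_le_sum (f := fun j => Complex.normSq (W j i)) (fun j _ => Complex.normSq_nonneg _)
        (mem_univ i))
  calc W.trace.re ^ 2 = (∑ i, (W i i).re) ^ 2 := by simp [trace, Complex.re_sum]
    _ ≤ Fintype.card ι * ∑ i, (W i i).re ^ 2 := by
      simpa using sq_sum_le_card_mul_sum_sq (s := univ) (f := fun i => (W i i).re)
    _ ≤ Fintype.card ι * (Wᴴ * W).trace.re := by gcongr

theorem re_trace_list_prod_le_card (L : List (Matrix ι ι ℂ))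
    (hL : ∀ A ∈ L, (1 - Aᴴ * A).PosSemidef) :
    L.prod.trace.re ≤ Fintype.card ι := by
  have h := (sq_re_trace_le_card_mul_re_trace_conjTranspose_mul_self L.prod).trans
    (mul_le_mul_of_nonneg_left (re_trace_conjTranspose_mul_self_list_prod_le_card L hL)
      (Nat.cast_nonneg _))
  nlinarith [Nat.cast_nonneg (α := ℝ) (Fintype.card ι)]

omit [Fintype ι] in
theorem PosSemidef.isHermitian_two_smul_sub_one {E : Matrix ι ι ℂ} (hE : E.PosSemidef) :
    ((2 : ℂ) • E - 1).IsHermitian :=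
  (hE.1.smul (IsSelfAdjoint.ofNat 2)).sub isHermitian_one

open scoped MatrixOrder in
theorem one_sub_conjTranspose_mul_self_two_smul_sub_one {E : Matrix ι ι ℂ} (hE : E.PosSemidef)
    (hE1 : (1 - E).PosSemidef) :
    (1 - ((2 : ℂ) • E - 1)ᴴ * ((2 : ℂ) • E - 1)).PosSemidef := by
  rw [(PosSemidef.isHermitian_two_smul_sub_one hE).eq]
  set S := CFC.sqrt E
  have hS : Sᴴ = S := (CFC.sqrt_nonneg E).posSemidef.1.eq
  have hSS : S * S = E := CFC.sqrt_mul_sqrt_self E hE.nonneg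
  -- `1 - (2E - 1)² = 4 (E - E²) = (2S)ᴴ (1 - E) (2S)` with `S = √E`
  have hfactor :
      1 - ((2 : ℂ) • E - 1) * ((2 : ℂ) • E - 1) = ((2 : ℂ) • S)ᴴ * (1 - E) * ((2 : ℂ) • S) := by
    rw [conjTranspose_smul, hS, ← hSS]
    simp only [star_ofNat, two_smul]
    noncomm_ring
  rw [hfactor]
  exact hE1.conjTranspose_mul_mul_same _

end Matrix

namespace Matrix.IsHermitian

variable {ι : Type*} [Fintype ι] [DecidableEq ι] {M : Matrix ι ι ℂ}

theorem re_trace_pow (hM : M.IsHermitian) (m : ℕ) :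
    (M ^ m).trace.re = ∑ k, hM.eigenvalues k ^ m := by
  conv_lhs => rw [hM.spectral_theorem, ← map_pow, Unitary.conjStarAlgAut_apply, trace_mul_cycle,
    Unitary.coe_star_mul_self, one_mul, diagonal_pow, trace_diagonal]
  simp [Complex.re_sum, ← Complex.ofReal_pow]

theorem exists_re_trace_mul_eq_sum (hM : M.IsHermitian) {ρ : Matrix ι ι ℂ} (hρ : ρ.PosSemidef)
    (hρ1 : ρ.trace = 1) :
    ∃ p : ι → ℝ, (∀ k, 0 ≤ p k) ∧ ∑ k, p k = 1 ∧
      (M * ρ).trace.re = ∑ k, p k * hM.eigenvalues k := by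
  set U : Matrix ι ι ℂ := (hM.eigenvectorUnitary : Matrix ι ι ℂ)
  set D : Matrix ι ι ℂ := diagonal (RCLike.ofReal ∘ hM.eigenvalues)
  set P := star U * ρ * U
  have hP : P.PosSemidef := hρ.conjTranspose_mul_mul_same _
  refine ⟨fun k => (P k k).re, fun k => (Complex.nonneg_iff.mp (hP.diag_nonneg (i := k))).1, ?_, ?_⟩
  · have hPtr : P.trace = 1 := by
      rw [trace_mul_cycle, ← Unitary.coe_star, Unitary.coe_mul_star_self, one_mul, hρ1]
    simpa [trace, Complex.re_sum] using congrArg Complex.re hPtr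
  · conv_lhs => rw [hM.spectral_theorem, Unitary.conjStarAlgAut_apply]
    have hcycle : (U * D * star U * ρ).trace = (D * P).trace := by
      simp only [P, mul_assoc]; rw [trace_mul_comm]; simp only [mul_assoc]
    rw [hcycle]
    simp [D, trace, diagonal_mul, Complex.re_sum, mul_comm]

theorem exp_mul_re_trace_mul_le (hM : M.IsHermitian) {ρ : Matrix ι ι ℂ} (hρ : ρ.PosSemidef)
    (hρ1 : ρ.trace = 1) (t : ℝ) :
    Real.exp (t * (M * ρ).trace.re) ≤ ∑ k, Real.exp (t * hM.eigenvalues k) := by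
  obtain ⟨p, hp0, hp1, hMρ⟩ := hM.exists_re_trace_mul_eq_sum hρ hρ1
  have hp_le_one : ∀ k, p k ≤ 1 := fun k =>
    hp1 ▸ single_le_sum (fun j _ => hp0 j) (mem_univ k)
  calc Real.exp (t * (M * ρ).trace.re) = Real.exp (∑ k, p k • (t * hM.eigenvalues k)) := by
        rw [hMρ, mul_sum]; simp only [smul_eq_mul]; ring_nf
    _ ≤ ∑ k, p k • Real.exp (t * hM.eigenvalues k) :=
        convexOn_exp.map_sum_le (fun k _ => hp0 k) hp1 fun _ _ => Set.mem_univ _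
    _ ≤ ∑ k, Real.exp (t * hM.eigenvalues k) := by
        gcongr with k
        exact mul_le_of_le_one_left (Real.exp_pos _).le (hp_le_one k)

end Matrix.IsHermitian

open Real hiding binEntropy

theorem sum_exp_mul_le_of_sum_pow_le {α β : Type*} [Fintype α] [Fintype β] {f : α → ℝ}
    {g : β → ℝ} {c t : ℝ} (ht : 0 ≤ t) (h : ∀ m : ℕ, ∑ a, f a ^ m ≤ c * ∑ b, g b ^ m) :
    ∑ a, exp (t * f a) ≤ c * ∑ b, exp (t * g b) := by
  have hasSum_exp (x : ℝ) : HasSum (fun m : ℕ => x ^ m / m.factorial) (exp x) :=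
    exp_eq_exp_ℝ ▸ NormedSpace.expSeries_div_hasSum_exp x
  refine hasSum_le (fun m => ?_) (hasSum_sum fun a _ => hasSum_exp (t * f a))
    ((hasSum_sum fun b _ => hasSum_exp (t * g b)).mul_left c)
  have hterm (x : ℝ) : (t * x) ^ m / m.factorial = t ^ m / m.factorial * x ^ m := by ring
  simp only [hterm, ← mul_sum, mul_left_comm c]
  exact mul_le_mul_of_nonneg_left (h m) (by positivity)

theorem card_mul_exp_le_sum_exp {β : Type*} [Fintype β] [Nonempty β] {f : β → ℝ} {a : ℝ}
    (ha : Fintype.card β * a ≤ ∑ b, f b) :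
    Fintype.card β * exp a ≤ ∑ b, exp (f b) := by
  have hN : (0 : ℝ) < Fintype.card β := Nat.cast_pos.mpr Fintype.card_pos
  have hjensen : exp (∑ b, (Fintype.card β : ℝ)⁻¹ • f b) ≤
      ∑ b, (Fintype.card β : ℝ)⁻¹ • exp (f b) :=
    convexOn_exp.map_sum_le (fun _ _ => by positivity) (by simp [hN.ne'])
      fun _ _ => Set.mem_univ _
  simp only [smul_eq_mul, ← mul_sum] at hjensen
  have hexp : exp a ≤ exp ((Fintype.card β : ℝ)⁻¹ * ∑ b, f b) := by
    rw [exp_le_exp, inv_mul_eq_div, le_div_iff₀ hN, mul_comm]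
    exact ha
  calc Fintype.card β * exp a ≤ Fintype.card β * ((Fintype.card β : ℝ)⁻¹ * ∑ b, exp (f b)) := by
        gcongr; exact hexp.trans hjensen
    _ = ∑ b, exp (f b) := by field_simp

theorem log_exp_add_exp_neg_le {t : ℝ} (ht : 0 ≤ t) : log (exp t + exp (-t)) ≤ t + exp (-t) := by
  rw [log_le_iff_le_exp (by positivity), exp_add]
  have hinv : exp t * exp (-t) = 1 := by rw [← exp_add, add_neg_cancel, exp_zero]
  nlinarith [mul_le_mul_of_nonneg_left (add_one_le_exp (exp (-t))) (exp_pos t).le,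
    exp_le_one_iff.mpr (neg_nonpos.mpr ht)]

theorem mul_one_sub_binEntropy_mul_log_two_le {ε c L : ℝ} (hε0 : 0 ≤ ε) (hε : ε ≤ 1 / 2)
    (hc : 0 ≤ c)
    (h : ∀ t : ℝ, 0 ≤ t → c * (log 2 + t * (1 - 2 * ε) - log (exp t + exp (-t))) ≤ L) :
    c * ((1 - binEntropy ε) * log 2) ≤ L := by
  rcases hε0.eq_or_lt with rfl | hεpos
  · -- the supremum over `t` is not attained: let `t → ∞`
    have hlim : Filter.Tendsto (fun t => c * (log 2 - exp (-t))) Filter.atTop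
        (nhds (c * (log 2 - 0))) :=
      (tendsto_exp_neg_atTop_nhds_zero.const_sub _).const_mul _
    refine le_of_tendsto (by simpa [binEntropy] using hlim)
      (Filter.eventually_atTop.mpr ⟨0, fun t ht => (h t ht).trans' ?_⟩)
    refine mul_le_mul_of_nonneg_left ?_ hc
    linarith [log_exp_add_exp_neg_le ht]
  · have h1ε : 0 < 1 - ε := by linarith
    set a := log ε
    set b := log (1 - ε)
    -- the optimal `t` satisfies `tanh t = 1 - 2ε`
    set t₀ := (b - a) / 2
    have ht₀ : 0 ≤ t₀ := by
      have hab : a ≤ b := log_le_log hεpos (by linarith)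
      simp only [t₀]; linarith
    have hcosh : exp t₀ + exp (-t₀) = exp (-(a + b) / 2) := by
      have hsplit : exp t₀ + exp (-t₀) = exp (-(a + b) / 2) * (exp b + exp a) := by
        rw [mul_add, ← exp_add, ← exp_add]
        congr 2 <;> ring
      rw [hsplit, exp_log hεpos, exp_log h1ε]; ring
    have hH : (1 - binEntropy ε) * log 2 = log 2 + ε * a + (1 - ε) * b := by
      simp only [binEntropy, logb, a, b]
      field_simp
      ring
    have hbound := h t₀ ht₀
    rw [hcosh, log_exp] at hbound
    rw [hH]
    convert hbound using 2
    simp only [t₀]; ring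

theorem one_sub_binEntropy_mul_le_logb {ε D : ℝ} {n : ℕ} (hε0 : 0 ≤ ε) (hε : ε ≤ 1 / 2)
    (hD : 0 < D)
    (h : ∀ t : ℝ, 0 ≤ t → 2 ^ n * exp (t * (n * (1 - 2 * ε))) ≤ D * (exp t + exp (-t)) ^ n) :
    (1 - binEntropy ε) * n ≤ logb 2 D := by
  rw [logb, le_div_iff₀ (log_pos one_lt_two), mul_right_comm, mul_comm]
  refine mul_one_sub_binEntropy_mul_log_two_le hε0 hε n.cast_nonneg fun t ht => ?_
  have hlog := log_le_log (by positivity) (h t ht)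
  rw [log_mul (by positivity) (by positivity), log_mul (by positivity) (by positivity), log_exp,
    log_pow, log_pow] at hlog
  linarith

def spin (b : Bool) : ℝ := if b then 1 else -1

theorem sum_prod_spin_nonneg {κ μ : Type*} [Fintype κ] [DecidableEq κ] [Fintype μ] (w : μ → κ) :
    0 ≤ ∑ x : κ → Bool, ∏ j, spin (x (w j)) := by
  have hfiber (x : κ → Bool) :
      ∏ j, spin (x (w j)) = ∏ i, spin (x i) ^ #{j | w j = i} := by
    rw [← prod_fiberwise univ w]
    refine prod_congr rfl fun i _ => ?_
    rw [prod_congr rfl fun j hj => by rw [(mem_filter.mp hj).2], prod_const]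
  simp_rw [hfiber]
  rw [← Fintype.prod_sum fun i b => spin b ^ #{j | w j = i}]
  refine prod_nonneg fun i _ => ?_
  rcases neg_one_pow_eq_or ℝ #{j | w j = i} with h | h <;> simp [spin, h]

theorem sum_exp_mul_sum_spin {κ : Type*} [Fintype κ] [DecidableEq κ] (t : ℝ) :
    ∑ x : κ → Bool, exp (t * ∑ i, spin (x i)) = (exp t + exp (-t)) ^ Fintype.card κ := by
  simp_rw [mul_sum, exp_sum]
  rw [← Fintype.prod_sum fun _ b => exp (t * spin b)]
  simp [spin]

theorem sum_smul_pow {κ R A : Type*} [Fintype κ] [CommSemiring R] [Semiring A] [Algebra R A]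
    (c : κ → R) (a : κ → A) (m : ℕ) :
    (∑ i, c i • a i) ^ m =
      ∑ w : Fin m → κ, (∏ j, c (w j)) • (List.ofFn fun j => a (w j)).prod := by
  induction m with
  | zero => simp
  | succ m ih =>
    rw [pow_succ', ih, sum_mul_sum, ← (Fin.consEquiv fun _ => κ).sum_comp, Fintype.sum_prod_type]
    refine sum_congr rfl fun i _ => sum_congr rfl fun w _ => ?_
    simp [Fin.prod_univ_succ, List.ofFn_succ, smul_smul, mul_comm]

section SpinSum

variable {ι κ : Type*} [Fintype ι] [DecidableEq ι] [Fintype κ]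

noncomputable def spinSum (B : κ → Matrix ι ι ℂ) (x : κ → Bool) : Matrix ι ι ℂ :=
  ∑ i, spin (x i) • B i

omit [Fintype ι] [DecidableEq ι] in
theorem isHermitian_spinSum {B : κ → Matrix ι ι ℂ} (hB : ∀ i, (B i).IsHermitian) (x : κ → Bool) :
    (spinSum B x).IsHermitian :=
  isSelfAdjoint_sum _ fun i _ => (hB i).smul (IsSelfAdjoint.all _)

theorem sum_re_trace_spinSum_pow_le [DecidableEq κ] {B : κ → Matrix ι ι ℂ}
    (hB : ∀ i, (1 - (B i)ᴴ * B i).PosSemidef) (m : ℕ) :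
    ∑ x : κ → Bool, ((spinSum B x) ^ m).trace.re ≤
      Fintype.card ι * ∑ x : κ → Bool, (∑ i, spin (x i)) ^ m := by
  have hword (w : Fin m → κ) : (List.ofFn fun j => B (w j)).prod.trace.re ≤ Fintype.card ι :=
    re_trace_list_prod_le_card _ fun A hA => by
      obtain ⟨j, rfl⟩ := List.mem_ofFn.mp hA
      exact hB _
  calc ∑ x : κ → Bool, ((spinSum B x) ^ m).trace.re
      = ∑ w : Fin m → κ, (∑ x : κ → Bool, ∏ j, spin (x (w j))) *
          (List.ofFn fun j => B (w j)).prod.trace.re := by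
        simp only [spinSum, sum_smul_pow, trace_sum, trace_smul, Complex.re_sum, Complex.smul_re,
          smul_eq_mul, sum_mul]
        exact sum_comm
    _ ≤ ∑ w : Fin m → κ, (∑ x : κ → Bool, ∏ j, spin (x (w j))) * Fintype.card ι := by
        gcongr with w
        · exact sum_prod_spin_nonneg w
        · exact hword w
    _ = Fintype.card ι * ∑ x : κ → Bool, (∑ i, spin (x i)) ^ m := by
        simp only [Fintype.sum_pow, mul_sum, sum_mul]
        rw [sum_comm]
        simp only [mul_comm]

theorem sum_exp_mul_re_trace_spinSum_mul_le [DecidableEq κ] {B : κ → Matrix ι ι ℂ}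
    (hBh : ∀ i, (B i).IsHermitian) (hB : ∀ i, (1 - (B i)ᴴ * B i).PosSemidef)
    {σ : (κ → Bool) → Matrix ι ι ℂ} (hσ : ∀ x, IsDensityMatrix (σ x)) {t : ℝ} (ht : 0 ≤ t) :
    ∑ x : κ → Bool, exp (t * (spinSum B x * σ x).trace.re) ≤
      Fintype.card ι * (exp t + exp (-t)) ^ Fintype.card κ := by
  have hM := isHermitian_spinSum hBh
  calc ∑ x : κ → Bool, exp (t * (spinSum B x * σ x).trace.re)
      ≤ ∑ x : κ → Bool, ∑ k, exp (t * (hM x).eigenvalues k) :=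
        sum_le_sum fun x _ => (hM x).exp_mul_re_trace_mul_le (hσ x).1 (hσ x).2 t
    _ = ∑ p : (κ → Bool) × ι, exp (t * (hM p.1).eigenvalues p.2) :=
        (Fintype.sum_prod_type fun p => exp (t * (hM p.1).eigenvalues p.2)).symm
    _ ≤ Fintype.card ι * ∑ x : κ → Bool, exp (t * ∑ i, spin (x i)) :=
        sum_exp_mul_le_of_sum_pow_le ht fun m => by
          rw [Fintype.sum_prod_type]
          simp only [← (hM _).re_trace_pow]
          exact sum_re_trace_spinSum_pow_le hB m
    _ = Fintype.card ι * (exp t + exp (-t)) ^ Fintype.card κ := by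
        rw [sum_exp_mul_sum_spin]

theorem sum_ite_re_trace_mul_eq {E : κ → Matrix ι ι ℂ} {ρ : Matrix ι ι ℂ} (hρ : ρ.trace = 1)
    (x : κ → Bool) :
    ∑ i, (if x i then (E i * ρ).trace.re else 1 - (E i * ρ).trace.re) =
      (Fintype.card κ + (spinSum (fun i => (2 : ℂ) • E i - 1) x * ρ).trace.re) / 2 := by
  have hterm (i : κ) : (((2 : ℂ) • E i - 1) * ρ).trace.re = 2 * (E i * ρ).trace.re - 1 := by
    simp [sub_mul, trace_sub, hρ]
  simp only [spinSum, sum_mul, smul_mul, trace_sum, trace_smul, Complex.re_sum, Complex.smul_re,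
    hterm, smul_eq_mul, add_div, sum_div, ← card_univ, card_eq_sum_ones, Nat.cast_sum,
    ← sum_add_distrib]
  refine sum_congr rfl fun i _ => ?_
  cases x i <;> simp [spin] <;> ring

end SpinSum

/-- **Average-case lower bound for quantum random access codes.** If an encoding of
`n`-bit strings into density matrices on `ℂ^d` admits, for each index `i`, a
two-outcome measurement recovering the `i`-th bit with average success probability
at least `1 - ε`, then `log₂ d ≥ (1 - H(ε)) n`. -/
theorem random_access_code_bound (n d : ℕ) (hn : 0 < n) (hd : 0 < d)
    (σ : (Fin n → Bool) → Matrix (Fin d) (Fin d) ℂ)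
    (hσ : ∀ x, IsDensityMatrix (σ x))
    (E : Fin n → Matrix (Fin d) (Fin d) ℂ) (hE : ∀ i, (E i).PosSemidef)
    (hE1 : ∀ i, ((1 : Matrix (Fin d) (Fin d) ℂ) - E i).PosSemidef)
    (ε : ℝ) (hε0 : 0 ≤ ε) (hε : ε ≤ 1 / 2)
    (hsucc : (1 : ℝ) / (n * 2 ^ n) * ∑ x : Fin n → Bool, ∑ i : Fin n,
        (if x i then ((E i * σ x).trace).re else 1 - ((E i * σ x).trace).re) ≥
      1 - ε) :
    Real.logb 2 d ≥ (1 - binEntropy ε) * n := by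
  have hcard : (Fintype.card (Fin n → Bool) : ℝ) = 2 ^ n := by simp
  set r := fun x => (spinSum (fun i => (2 : ℂ) • E i - 1) x * σ x).trace.re
  have hcorr : 2 ^ n * (n * (1 - 2 * ε)) ≤ ∑ x, r x := by
    simp only [sum_ite_re_trace_mul_eq (hσ _).2, Fintype.card_fin, ← sum_div, sum_add_distrib,
      sum_const, card_univ, nsmul_eq_mul, hcard] at hsucc
    rw [ge_iff_le, one_div_mul_eq_div, le_div_iff₀ (by positivity)] at hsucc
    linarith
  refine one_sub_binEntropy_mul_le_logb hε0 hε (Nat.cast_pos.mpr hd) fun t ht => ?_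
  calc 2 ^ n * exp (t * (n * (1 - 2 * ε))) ≤ ∑ x, exp (t * r x) := by
        rw [← hcard]
        refine card_mul_exp_le_sum_exp ?_
        rw [hcard, ← mul_sum, mul_left_comm]
        exact mul_le_mul_of_nonneg_left hcorr ht
    _ ≤ d * (exp t + exp (-t)) ^ n := by
        simpa using sum_exp_mul_re_trace_spinSum_mul_le
          (fun i => (hE i).isHermitian_two_smul_sub_one)
          (fun i => one_sub_conjTranspose_mul_self_two_smul_sub_one (hE i) (hE1 i)) hσ ht
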